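/- If I is a maximum critical independent set of G and R is a maximum independent set of the induced subgraph G[L^c(G)], then I ∪ R is a maximum independent set of G. -/

import Mathlib

open Finset

variable {V : Type*} [Fintype V] [DecidableEq V] (G : SimpleGraph V) [DecidableRel G.Adj]

/-- `N(S)`: the set of vertices adjacent to some vertex of `S`. -/
def nbhd (S : Finset V) : Finset V := S.biUnion (fun v => G.neighborFinset v)

/-- `S` is an independent set of `G`. -/
def Indep (S : Finset V) : Prop := ∀ u ∈ S, ∀ v ∈ S, ¬ G.Adj u v

/-- The difference `d_G(S) = |S| - |N(S)|`. -/
def diffI (S : Finset V) : ℤ := (S.card : ℤ) - ((nbhd G S).card : ℤ)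

/-- `S` is a maximum independent set of `G`. -/
def IsMaxIndep (S : Finset V) : Prop :=
  Indep G S ∧ ∀ T : Finset V, Indep G T → T.card ≤ S.card

/-- `I` is a critical independent set of `G`. -/
def IsCritIndep (I : Finset V) : Prop :=
  Indep G I ∧ ∀ J : Finset V, Indep G J → diffI G J ≤ diffI G I

/-- `I` is a maximum critical independent set of `G`. -/
def IsMaxCritIndep (I : Finset V) : Prop :=
  IsCritIndep G I ∧ ∀ J : Finset V, IsCritIndep G J → J.card ≤ I.card

/-- `core(G)`: intersection of all maximum independent sets. -/
def core : Set V := {v | ∀ S : Finset V, IsMaxIndep G S → v ∈ S}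

/-- `corona(G)`: union of all maximum independent sets. -/
def corona : Set V := {v | ∃ S : Finset V, IsMaxIndep G S ∧ v ∈ S}

/-- `nucleus(G)`: intersection of all maximum critical independent sets. -/
def nucleus : Set V := {v | ∀ S : Finset V, IsMaxCritIndep G S → v ∈ S}

/-- `diadem(G)`: union of all maximum critical independent sets. -/
def diadem : Set V := {v | ∃ S : Finset V, IsMaxCritIndep G S ∧ v ∈ S}

/-- `ker(G)`: intersection of all critical independent sets. -/
def kerS : Set V := {v | ∀ S : Finset V, IsCritIndep G S → v ∈ S}

/-- A matching of `G`, given as an involution of the vertex set: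
unmatched vertices are fixed points, matched vertices are sent to their partner. -/
def IsMatching (M : V → V) : Prop :=
  Function.Involutive M ∧ ∀ v, M v ≠ v → G.Adj v (M v)

/-- Twice the number of edges of the matching `M`, i.e. the number of matched vertices. -/
def matchSize (M : V → V) : ℕ := (univ.filter fun v => M v ≠ v).card

/-- `M` is a maximum matching of `G`. -/
def IsMaxMatching (M : V → V) : Prop :=
  IsMatching G M ∧ ∀ M' : V → V, IsMatching G M' → matchSize M' ≤ matchSize M

/-- `M` is a matching of the induced subgraph `G[L]`. -/
def IsMatchingOn (L : Finset V) (M : V → V) : Prop :=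
  IsMatching G M ∧ ∀ v, M v ≠ v → v ∈ L

/-- `M` is a maximum matching of the induced subgraph `G[L]`. -/
def IsMaxMatchingOn (L : Finset V) (M : V → V) : Prop :=
  IsMatchingOn G L M ∧ ∀ M' : V → V, IsMatchingOn G L M' → matchSize M' ≤ matchSize M

/-- `S` is a maximum independent set of the induced subgraph `G[L]`. -/
def IsMaxIndepOn (L : Finset V) (S : Finset V) : Prop :=
  S ⊆ L ∧ Indep G S ∧ ∀ T : Finset V, T ⊆ L → Indep G T → T.card ≤ S.card

/-- `core` of the induced subgraph `G[L]`. -/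
def coreOn (L : Finset V) : Set V := {v | ∀ S : Finset V, IsMaxIndepOn G L S → v ∈ S}

/-- `D(G[L])`: vertices of `L` missed by some maximum matching of `G[L]`. -/
def Dset (L : Finset V) : Set V := {v | v ∈ L ∧ ∃ M : V → V, IsMaxMatchingOn G L M ∧ M v = v}

/-- The Larson boundary `∂_L(G)` of the set `L`. -/
def boundaryL (L : Finset V) : Set V := {v | v ∈ L ∧ ∃ w, w ∉ L ∧ G.Adj v w}

/-- The critical difference `d(G)`. -/
noncomputable def critDiff : ℤ := sSup {d : ℤ | ∃ X : Finset V, diffI G X = d}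

/-- The difference of `S` computed in the induced subgraph `G[L]`. -/
def diffOn (L : Finset V) (S : Finset V) : ℤ := (S.card : ℤ) - ((nbhd G S ∩ L).card : ℤ)

/-- The critical difference of the induced subgraph `G[L]`. -/
noncomputable def critDiffOn (L : Finset V) : ℤ := sSup {d : ℤ | ∃ X : Finset V, X ⊆ L ∧ diffOn G L X = d}

/-- `G` is a König–Egerváry graph: `α(G) + μ(G) = |V(G)|`. -/
def KonigEgervary : Prop :=
  ∃ (S : Finset V) (M : V → V), IsMaxIndep G S ∧ IsMaxMatching G M ∧
    2 * S.card + matchSize M = 2 * Fintype.card V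

/-!
An independent set inside `L = I ∪ N(I)` has at most `|I|` vertices: its part `B` outside `I`
lies in `N(I)`, and criticality of `I` gives the Hall-type inequality `|B| ≤ |N(B) ∩ I|`, where
`N(B) ∩ I` avoids the independent set. An independent set `T` of `G` therefore has
`|T ∩ L| ≤ |I|` and `|T \ L| ≤ |R|`, while `I ∪ R` is independent because `R` avoids `N(I)`.
-/

variable {G}

omit [Fintype V] [DecidableEq V] [DecidableRel G.Adj] in
theorem Indep.mono {S T : Finset V} (hS : Indep G S) (hTS : T ⊆ S) : Indep G T :=
  fun u hu v hv => hS u (hTS hu) v (hTS hv)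

omit [Fintype V] [DecidableRel G.Adj] in
theorem Indep.union {S T : Finset V} (hS : Indep G S) (hT : Indep G T)
    (hST : ∀ u ∈ S, ∀ v ∈ T, ¬ G.Adj u v) : Indep G (S ∪ T) := by
  intro u hu v hv huv
  rcases mem_union.1 hu with hu | hu <;> rcases mem_union.1 hv with hv | hv
  exacts [hS u hu v hv huv, hST u hu v hv huv, hST v hv u hu huv.symm, hT u hu v hv huv]

theorem mem_nbhd {S : Finset V} {v : V} : v ∈ nbhd G S ↔ ∃ u ∈ S, G.Adj u v := by
  simp [nbhd]

theorem card_le_card_nbhd_inter_of_isCritIndep {I S : Finset V} (hI : IsCritIndep G I)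
    (hS : S ⊆ nbhd G I) : #S ≤ #(nbhd G S ∩ I) := by
  have hJ : diffI G (I \ nbhd G S) ≤ diffI G I := hI.2 _ (hI.1.mono sdiff_subset)
  have hnbhd : nbhd G (I \ nbhd G S) ⊆ nbhd G I \ S := by
    intro w hw
    obtain ⟨u, hu, huw⟩ := mem_nbhd.1 hw
    rw [mem_sdiff] at hu ⊢
    exact ⟨mem_nbhd.2 ⟨u, hu.1, huw⟩, fun hwS => hu.2 (mem_nbhd.2 ⟨w, hwS, huw.symm⟩)⟩
  have h₁ := card_le_card hnbhd
  have h₂ := card_sdiff_add_card_eq_card hS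
  have h₃ := card_inter_add_card_sdiff I (nbhd G S)
  rw [inter_comm] at h₃
  unfold diffI at hJ
  omega

theorem card_le_of_isCritIndep {I A : Finset V} (hI : IsCritIndep G I) (hA : Indep G A)
    (hAL : A ⊆ I ∪ nbhd G I) : #A ≤ #I := by
  have hB : A \ I ⊆ nbhd G I := fun v hv =>
    (mem_union.1 (hAL (mem_sdiff.1 hv).1)).resolve_left (mem_sdiff.1 hv).2
  have hNB : nbhd G (A \ I) ∩ I ⊆ I \ A := by
    intro w hw
    obtain ⟨hwN, hwI⟩ := mem_inter.1 hw
    obtain ⟨u, hu, huw⟩ := mem_nbhd.1 hwN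
    exact mem_sdiff.2 ⟨hwI, fun hwA => hA u (mem_sdiff.1 hu).1 w hwA huw⟩
  have hHall := (card_le_card_nbhd_inter_of_isCritIndep hI hB).trans (card_le_card hNB)
  have h₁ := card_inter_add_card_sdiff A I
  have h₂ := card_inter_add_card_sdiff I A
  rw [inter_comm] at h₂
  omega

theorem stmt9 (I R : Finset V) (hI : IsMaxCritIndep G I)
    (hR : IsMaxIndepOn G (univ \ (I ∪ nbhd G I)) R) :
    IsMaxIndep G (I ∪ R) := by
  obtain ⟨hRL, hRind, hRmax⟩ := hR
  have hRout : ∀ v ∈ R, v ∉ I ∧ v ∉ nbhd G I := fun v hv => by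
    simpa using hRL hv
  refine ⟨hI.1.1.union hRind fun u hu v hv huv => (hRout v hv).2 (mem_nbhd.2 ⟨u, hu, huv⟩),
    fun T hT => ?_⟩
  have hInside : #(T ∩ (I ∪ nbhd G I)) ≤ #I :=
    card_le_of_isCritIndep hI.1 (hT.mono inter_subset_left) inter_subset_right
  have hOutside : #(T \ (I ∪ nbhd G I)) ≤ #R :=
    hRmax _ (sdiff_subset_sdiff (subset_univ T) subset_rfl) (hT.mono sdiff_subset)
  have hSplit := card_inter_add_card_sdiff T (I ∪ nbhd G I)
  have hDisj : #(I ∪ R) = #I + #R :=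
    card_union_of_disjoint (disjoint_right.2 fun v hv => (hRout v hv).1)
  omega
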